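/- arXiv:2501.05445 — 5 statements merged into one kernel-verified Lean document; each statement's English description precedes it below -/
import Mathlib

section
/- Let d ≥ 1 and work in ℝ^d. Let α, σ : ℝ → ℝ with α s ≠ 0 for every s ∈ ℝ, let t ∈ ℝ, and let λ' ∈ ℝ be such that the function s ↦ σ s / α s has derivative λ' at t (HasDerivAt). Let ε_φ : ℝ^d → ℝ → ℝ^d be any function and ε̃ ∈ ℝ^d a fixed vector. Suppose x̂ : ℝ → ℝ^d satisfies the clean-flow ODE at t, i.e. HasDerivAt x̂ (λ' • (ε_φ (α t • x̂ t + σ t • ε̃) t − ε̃)) t. Define x : ℝ → ℝ^d by x s = α s • x̂ s + σ s • ε̃. Then HasDerivAt (fun s => (α s)⁻¹ • x s) (λ' • ε_φ (x t) t) t; that is, x satisfies the probability-flow ODE d(x_t/α_t) = d(σ_t/α_t) · ε_φ(x_t, t) at t. -/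
/-! Dividing `x = α • x̂ + σ • ε̃` by `α` gives `x̂ + (σ / α) • ε̃`, whose derivative is
`x̂' + λ' • ε̃`; under the clean-flow ODE the two `ε̃` terms cancel. -/

open Topology

section

variable {𝕜 E : Type*} [NontriviallyNormedField 𝕜] [NormedAddCommGroup E] [NormedSpace 𝕜 E]

theorem inv_smul_smul_add_smul {a b : 𝕜} (ha : a ≠ 0) (y e : E) :
    a⁻¹ • (a • y + b • e) = y + (b / a) • e := by
  rw [smul_add, inv_smul_smul₀ ha, smul_smul, div_eq_inv_mul]

theorem HasDerivAt.inv_smul_smul_add_smul {α σ : 𝕜 → 𝕜} {y : 𝕜 → E} {y' e : E} {c t : 𝕜}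
    (hα : ∀ᶠ s in 𝓝 t, α s ≠ 0) (hy : HasDerivAt y y' t)
    (hσα : HasDerivAt (fun s => σ s / α s) c t) :
    HasDerivAt (fun s => (α s)⁻¹ • (α s • y s + σ s • e)) (y' + c • e) t :=
  (hy.add (hσα.smul_const e)).congr_of_eventuallyEq <|
    hα.mono fun _ hs => _root_.inv_smul_smul_add_smul hs _ _

end

theorem clean_flow_to_pf_ode_general
    (d : ℕ)
    (α σ : ℝ → ℝ) (hα : ∀ s, α s ≠ 0)
    (t lam' : ℝ)
    (hlam : HasDerivAt (fun s => σ s / α s) lam' t)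
    (εφ : EuclideanSpace ℝ (Fin d) → ℝ → EuclideanSpace ℝ (Fin d))
    (εtil : EuclideanSpace ℝ (Fin d))
    (xhat x : ℝ → EuclideanSpace ℝ (Fin d))
    (hxhat : HasDerivAt xhat (lam' • (εφ (α t • xhat t + σ t • εtil) t - εtil)) t)
    (hx : ∀ s, x s = α s • xhat s + σ s • εtil) :
    HasDerivAt (fun s => (α s)⁻¹ • x s) (lam' • εφ (x t) t) t := by
  obtain rfl : x = fun s => α s • xhat s + σ s • εtil := funext hx
  have hflow := HasDerivAt.inv_smul_smul_add_smul (e := εtil) (.of_forall hα) hxhat hlam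
  rwa [smul_sub, sub_add_cancel] at hflow

/-- Clean-flow ODE solution gives a PF-ODE solution (deterministic case of the
paper's Proposition "Clean flow SDE is equivalent to diffusion SDE"). -/
theorem clean_flow_to_pf_ode
    (d : ℕ) (hd : 1 ≤ d)
    (α σ : ℝ → ℝ) (hα : ∀ s, α s ≠ 0)
    (t lam' : ℝ)
    (hlam : HasDerivAt (fun s => σ s / α s) lam' t)
    (εφ : EuclideanSpace ℝ (Fin d) → ℝ → EuclideanSpace ℝ (Fin d))
    (εtil : EuclideanSpace ℝ (Fin d))
    (xhat x : ℝ → EuclideanSpace ℝ (Fin d))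
    (hxhat : HasDerivAt xhat (lam' • (εφ (α t • xhat t + σ t • εtil) t - εtil)) t)
    (hx : ∀ s, x s = α s • xhat s + σ s • εtil) :
    HasDerivAt (fun s => (α s)⁻¹ • x s) (lam' • εφ (x t) t) t :=
  clean_flow_to_pf_ode_general d α σ hα t lam' hlam εφ εtil xhat x hxhat hx
end

section
/- Let d ≥ 1 and work in ℝ^d. Let α, σ : ℝ → ℝ, t ∈ ℝ with α t ≠ 0, and let λ' ∈ ℝ be such that the function s ↦ σ s / α s has derivative λ' at t (HasDerivAt). Let ε_φ : ℝ^d → ℝ → ℝ^d, ε̃ ∈ ℝ^d, and let x : ℝ → ℝ^d satisfy the probability-flow ODE at t, i.e. HasDerivAt (fun s => (α s)⁻¹ • x s) (λ' • ε_φ (x t) t) t. Define the clean variable x̂ : ℝ → ℝ^d by x̂ s = (α s)⁻¹ • (x s − σ s • ε̃). Then α t • x̂ t + σ t • ε̃ = x t, and HasDerivAt x̂ (λ' • (ε_φ (α t • x̂ t + σ t • ε̃) t − ε̃)) t; that is, x̂ satisfies the clean-flow ODE at t. -/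
theorem HasDerivAt.inv_smul_sub_smul {𝕜 E : Type*} [NontriviallyNormedField 𝕜]
    [NormedAddCommGroup E] [NormedSpace 𝕜 E] {α σ : 𝕜 → 𝕜} {x : 𝕜 → E} {e v : E} {t lam' : 𝕜}
    (hx : HasDerivAt (fun s => (α s)⁻¹ • x s) v t)
    (hlam : HasDerivAt (fun s => σ s / α s) lam' t) :
    HasDerivAt (fun s => (α s)⁻¹ • (x s - σ s • e)) (v - lam' • e) t := by
  have hsplit : (fun s => (α s)⁻¹ • (x s - σ s • e)) =
      fun s => (α s)⁻¹ • x s - (σ s / α s) • e := by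
    funext s
    rw [smul_sub, smul_smul, div_eq_inv_mul]
  rw [hsplit]
  exact hx.sub (hlam.smul_const e)

theorem pf_ode_to_clean_flow_general
    (d : ℕ)
    (α σ : ℝ → ℝ) (t : ℝ) (hαt : α t ≠ 0)
    (lam' : ℝ)
    (hlam : HasDerivAt (fun s => σ s / α s) lam' t)
    (εφ : EuclideanSpace ℝ (Fin d) → ℝ → EuclideanSpace ℝ (Fin d))
    (εtil : EuclideanSpace ℝ (Fin d))
    (x xhat : ℝ → EuclideanSpace ℝ (Fin d))
    (hx : HasDerivAt (fun s => (α s)⁻¹ • x s) (lam' • εφ (x t) t) t)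
    (hxhat : ∀ s, xhat s = (α s)⁻¹ • (x s - σ s • εtil)) :
    α t • xhat t + σ t • εtil = x t ∧
      HasDerivAt xhat (lam' • (εφ (α t • xhat t + σ t • εtil) t - εtil)) t := by
  have hrecover : α t • xhat t + σ t • εtil = x t := by
    rw [hxhat t, smul_inv_smul₀ hαt, sub_add_cancel]
  refine ⟨hrecover, ?_⟩
  rw [hrecover, smul_sub, funext hxhat]
  exact hx.inv_smul_sub_smul hlam

/-- The change of variable x̂ := (x − σ ε̃)/α turns a PF-ODE solution into a
clean-flow ODE solution (the paper's Eq. 7–9). -/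
theorem pf_ode_to_clean_flow
    (d : ℕ) (hd : 1 ≤ d)
    (α σ : ℝ → ℝ) (t : ℝ) (hαt : α t ≠ 0)
    (lam' : ℝ)
    (hlam : HasDerivAt (fun s => σ s / α s) lam' t)
    (εφ : EuclideanSpace ℝ (Fin d) → ℝ → EuclideanSpace ℝ (Fin d))
    (εtil : EuclideanSpace ℝ (Fin d))
    (x xhat : ℝ → EuclideanSpace ℝ (Fin d))
    (hx : HasDerivAt (fun s => (α s)⁻¹ • x s) (lam' • εφ (x t) t) t)
    (hxhat : ∀ s, xhat s = (α s)⁻¹ • (x s - σ s • εtil)) :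
    α t • xhat t + σ t • εtil = x t ∧
      HasDerivAt xhat (lam' • (εφ (α t • xhat t + σ t • εtil) t - εtil)) t :=
  pf_ode_to_clean_flow_general d α σ t hαt lam' hlam εφ εtil x xhat hx hxhat
end

section
/- Fix d ≥ 1 and real numbers α > 0, σ > 0. Let p₀ : ℝ^d → ℝ be measurable, nonnegative and Lebesgue-integrable with ∫ p₀ = 1. Define the Gaussian kernel K(x,y) = (2πσ²)^{−d/2} · exp(−‖x − α•y‖² / (2σ²)) and the smoothed density p(x) = ∫ K(x,y) · p₀(y) dy. Then p is differentiable at every x ∈ ℝ^d, the function y ↦ y • (K(x,y) · p₀(y)) is Bochner integrable for every x, and σ² • ∇p(x) + p(x) • x = α • ∫ y • (K(x,y) · p₀(y)) dy. In particular, at every x with p(x) > 0, the score satisfies σ² • ∇ log p(x) = −(x − α • m(x)) where m(x) = (1/p(x)) • ∫ y • (K(x,y) · p₀(y)) dy is the posterior mean E[x₀ | x]. -/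
/-!
Differentiating under the integral sign, with the domination `‖x - α • y‖ K(x, y) ≤ σ (2πσ²)^{-d/2}`
coming from `t e^{-t²/2σ²} ≤ σ`, gives `σ² ∇p(x) = -∫ (x - α • y) K(x, y) p₀(y) dy`, i.e.
`σ² ∇p(x) = α ∫ y K(x, y) p₀(y) dy - p(x) x`. The score identity is this divided by `p(x)`.
-/

open MeasureTheory Real InnerProductSpace Filter Topology

section Gradient

variable {E : Type*} [NormedAddCommGroup E] [InnerProductSpace ℝ E] [CompleteSpace E]

theorem HasGradientAt.log {f : E → ℝ} {g x : E} (hf : HasGradientAt f g x) (hx : f x ≠ 0) :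
    HasGradientAt (fun z => Real.log (f z)) ((f x)⁻¹ • g) x := by
  rw [hasGradientAt_iff_hasFDerivAt, map_smulₛₗ, starRingEnd_apply, star_trivial]
  exact (hasGradientAt_iff_hasFDerivAt.1 hf).log hx

theorem hasGradientAt_integral_of_dominated_of_gradient_le {X : Type*} [MeasurableSpace X]
    {μ : Measure X} {F : E → X → ℝ} {G : E → X → E} {x₀ : E} {s : Set E} {bound : X → ℝ}
    (hs : s ∈ 𝓝 x₀) (hF_meas : ∀ᶠ x in 𝓝 x₀, AEStronglyMeasurable (F x) μ)
    (hF_int : Integrable (F x₀) μ) (hG_meas : AEStronglyMeasurable (G x₀) μ)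
    (h_bound : ∀ᵐ a ∂μ, ∀ x ∈ s, ‖G x a‖ ≤ bound a) (bound_integrable : Integrable bound μ)
    (h_diff : ∀ᵐ a ∂μ, ∀ x ∈ s, HasGradientAt (F · a) (G x a) x) :
    HasGradientAt (fun x => ∫ a, F x a ∂μ) (∫ a, G x₀ a ∂μ) x₀ := by
  have hG_int : Integrable (G x₀) μ :=
    bound_integrable.mono' hG_meas (h_bound.mono fun a ha => ha x₀ (mem_of_mem_nhds hs))
  have hdual : ∫ a, toDual ℝ E (G x₀ a) ∂μ = toDual ℝ E (∫ a, G x₀ a ∂μ) :=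
    (toDual ℝ E).toContinuousLinearEquiv.toContinuousLinearMap.integral_comp_commSL
      (by simp) hG_int
  rw [hasGradientAt_iff_hasFDerivAt, ← hdual]
  exact hasFDerivAt_integral_of_dominated_of_fderiv_le (F' := fun x a => toDual ℝ E (G x a))
    hs hF_meas hF_int ((toDual ℝ E).continuous.comp_aestronglyMeasurable hG_meas)
    (by simpa only [LinearIsometryEquiv.norm_map] using h_bound) bound_integrable
    (by simpa only [hasGradientAt_iff_hasFDerivAt] using h_diff)

end Gradient

theorem mul_exp_neg_sq_div_le {σ : ℝ} (hσ : 0 < σ) (t : ℝ) :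
    t * exp (-t ^ 2 / (2 * σ ^ 2)) ≤ σ := by
  -- `1 + u ≤ e^u` reduces the claim to `t ≤ σ + t² / 2σ`, which is AM-GM.
  have ht : t ≤ σ * (1 + t ^ 2 / (2 * σ ^ 2)) := by
    have h : σ * (1 + t ^ 2 / (2 * σ ^ 2)) - t = ((t - σ) ^ 2 + σ ^ 2) / (2 * σ) := by
      field_simp
      ring
    linarith [show 0 ≤ ((t - σ) ^ 2 + σ ^ 2) / (2 * σ) by positivity]
  rw [neg_div, exp_neg, ← div_eq_mul_inv, div_le_iff₀ (exp_pos _)]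
  exact ht.trans <| mul_le_mul_of_nonneg_left
    (by linarith [add_one_le_exp (t ^ 2 / (2 * σ ^ 2))]) hσ.le

section GaussianKernel

variable {E : Type*} [NormedAddCommGroup E] [InnerProductSpace ℝ E]

noncomputable def gaussianKernel (c α σ : ℝ) (x y : E) : ℝ :=
  c * exp (-‖x - α • y‖ ^ 2 / (2 * σ ^ 2))

variable (c α : ℝ) {σ : ℝ} (x y : E)

theorem gaussianKernel_mul (σ r : ℝ) :
    gaussianKernel c α σ x y * r = gaussianKernel (c * r) α σ x y := by
  simp only [gaussianKernel]
  ring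

theorem abs_gaussianKernel_le (σ : ℝ) : |gaussianKernel c α σ x y| ≤ |c| := by
  rw [gaussianKernel, abs_mul, abs_exp]
  refine mul_le_of_le_one_right (abs_nonneg c) (exp_le_one_iff.2 ?_)
  rw [neg_div]
  exact neg_nonpos.2 (by positivity)

theorem norm_sub_smul_mul_abs_gaussianKernel_le (hσ : 0 < σ) :
    ‖x - α • y‖ * |gaussianKernel c α σ x y| ≤ σ * |c| := by
  rw [gaussianKernel, abs_mul, abs_exp, mul_left_comm, mul_comm σ]
  exact mul_le_mul_of_nonneg_left (mul_exp_neg_sq_div_le hσ _) (abs_nonneg c)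

theorem continuous_gaussianKernel (σ : ℝ) : Continuous (gaussianKernel c α σ x) := by
  unfold gaussianKernel
  fun_prop

theorem hasGradientAt_gaussianKernel [CompleteSpace E] (σ : ℝ) :
    HasGradientAt (gaussianKernel c α σ · y)
      ((-(σ ^ 2)⁻¹ * gaussianKernel c α σ x y) • (x - α • y)) x := by
  have h := (((hasFDerivAt_id x).sub_const (α • y)).norm_sq.const_mul
    (-(2 * σ ^ 2)⁻¹)).exp.const_mul c
  have hk : (gaussianKernel c α σ · y) =
      fun x' => c * exp (-(2 * σ ^ 2)⁻¹ * ‖id x' - α • y‖ ^ 2) := by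
    ext x'
    rw [gaussianKernel, id, neg_div, div_eq_inv_mul, neg_mul]
  rw [hasGradientAt_iff_hasFDerivAt, hk]
  refine h.congr_fderiv ?_
  ext v
  simp only [gaussianKernel, toDual_apply_apply, coe_innerSL_apply, id_eq, smul_apply, neg_apply,
    sub_apply, ContinuousLinearMap.comp_id, map_sub, map_smul, map_neg, smul_eq_mul, nsmul_eq_mul,
    Nat.cast_ofNat, div_eq_inv_mul, mul_inv_rev, neg_mul, mul_neg, neg_smul, smul_neg, neg_inj]
  ring

end GaussianKernel

section GaussianSmoothing

variable {E : Type*} [NormedAddCommGroup E] [InnerProductSpace ℝ E] [MeasurableSpace E]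
  [BorelSpace E] {μ : Measure E} {f : E → ℝ} (c α : ℝ) {σ : ℝ} (x : E)

theorem integrable_gaussianKernel_mul (σ : ℝ) (hf : Integrable f μ) :
    Integrable (fun y => gaussianKernel c α σ x y * f y) μ :=
  hf.bdd_mul (continuous_gaussianKernel c α x σ).aestronglyMeasurable
    (ae_of_all _ fun y => abs_gaussianKernel_le c α x y σ)

variable [SecondCountableTopology E]

theorem integrable_gaussianKernel_mul_smul_sub (hσ : 0 < σ) (hf : Integrable f μ) :
    Integrable (fun y => (gaussianKernel c α σ x y * f y) • (x - α • y)) μ := by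
  have h := hf.smul_bdd (f := fun y => gaussianKernel c α σ x y • (x - α • y)) (σ * |c|)
    ((continuous_gaussianKernel c α x σ).smul
      (continuous_const.sub (continuous_const_smul α))).aestronglyMeasurable
    (ae_of_all _ fun y => by
      rw [norm_smul, Real.norm_eq_abs, mul_comm]
      exact norm_sub_smul_mul_abs_gaussianKernel_le c α x y hσ)
  refine h.congr (ae_of_all _ fun y => ?_)
  simp only [Pi.smul_apply', smul_smul, mul_comm]

theorem integrable_gaussianKernel_mul_smul (hσ : 0 < σ) (hα : α ≠ 0) (hf : Integrable f μ) :
    Integrable (fun y => (gaussianKernel c α σ x y * f y) • y) μ := by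
  have h := (((integrable_gaussianKernel_mul c α x σ hf).smul_const x).sub
    (integrable_gaussianKernel_mul_smul_sub c α x hσ hf)).smul α⁻¹
  refine h.congr (ae_of_all _ fun y => ?_)
  simp only [Pi.smul_apply, Pi.sub_apply, ← smul_sub, sub_sub_cancel, smul_comm _ α,
    smul_inv_smul₀ hα]

variable [CompleteSpace E]

theorem integral_gaussianKernel_mul_smul_sub (hσ : 0 < σ) (hα : α ≠ 0) (hf : Integrable f μ) :
    ∫ y, (gaussianKernel c α σ x y * f y) • (x - α • y) ∂μ =
      (∫ y, gaussianKernel c α σ x y * f y ∂μ) • x -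
        α • ∫ y, (gaussianKernel c α σ x y * f y) • y ∂μ := by
  simp only [smul_sub, smul_comm _ α]
  rw [integral_sub ((integrable_gaussianKernel_mul c α x σ hf).smul_const x)
    ((integrable_gaussianKernel_mul_smul c α x hσ hα hf).fun_smul α), integral_smul_const,
    integral_smul]

theorem hasGradientAt_integral_gaussianKernel_mul (hσ : 0 < σ) (hf : Integrable f μ) :
    HasGradientAt (fun x => ∫ y, gaussianKernel c α σ x y * f y ∂μ)
      (-(σ ^ 2)⁻¹ • ∫ y, (gaussianKernel c α σ x y * f y) • (x - α • y) ∂μ) x := by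
  rw [← integral_smul]
  refine hasGradientAt_integral_of_dominated_of_gradient_le (s := Set.univ)
    (G := fun x y => -(σ ^ 2)⁻¹ • (gaussianKernel c α σ x y * f y) • (x - α • y))
    (bound := fun y => (σ ^ 2)⁻¹ * (σ * |c|) * ‖f y‖) univ_mem
    (Eventually.of_forall fun x => (integrable_gaussianKernel_mul c α x σ hf).aestronglyMeasurable)
    (integrable_gaussianKernel_mul c α x σ hf)
    ((integrable_gaussianKernel_mul_smul_sub c α x hσ hf).fun_smul _).aestronglyMeasurable
    (ae_of_all _ fun y x _ => ?_) (hf.norm.const_mul _) (ae_of_all _ fun y x _ => ?_)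
  · calc ‖-(σ ^ 2)⁻¹ • (gaussianKernel c α σ x y * f y) • (x - α • y)‖
          = (σ ^ 2)⁻¹ * (‖x - α • y‖ * |gaussianKernel c α σ x y|) * ‖f y‖ := by
            rw [norm_smul, norm_smul, norm_neg, norm_inv, norm_pow, norm_mul, Real.norm_eq_abs,
              Real.norm_eq_abs, Real.norm_eq_abs, sq_abs]
            ring
        _ ≤ (σ ^ 2)⁻¹ * (σ * |c|) * ‖f y‖ := by
            gcongr ?_ * _
            exact mul_le_mul_of_nonneg_left
              (norm_sub_smul_mul_abs_gaussianKernel_le c α x y hσ) (by positivity)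
  · simpa only [gaussianKernel_mul, smul_smul] using
      hasGradientAt_gaussianKernel (c * f y) α x y σ

end GaussianSmoothing

theorem gaussian_smoothing_score_posterior_mean_general
    (d : ℕ) (α σ : ℝ) (hα : 0 < α) (hσ : 0 < σ)
    (p₀ : EuclideanSpace ℝ (Fin d) → ℝ)
    (hp₀int : Integrable p₀)
    (K : EuclideanSpace ℝ (Fin d) → EuclideanSpace ℝ (Fin d) → ℝ)
    (hK : ∀ x y, K x y =
      (2 * π * σ ^ 2) ^ (-(d : ℝ) / 2) * Real.exp (-‖x - α • y‖ ^ 2 / (2 * σ ^ 2)))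
    (p : EuclideanSpace ℝ (Fin d) → ℝ)
    (hp : ∀ x, p x = ∫ y, K x y * p₀ y) :
    (∀ x, DifferentiableAt ℝ p x) ∧
    (∀ x, Integrable (fun y => (K x y * p₀ y) • y)) ∧
    (∀ x, σ ^ 2 • gradient p x + p x • x = α • ∫ y, (K x y * p₀ y) • y) ∧
    (∀ x, 0 < p x →
      σ ^ 2 • gradient (fun z => Real.log (p z)) x =
        -(x - α • ((p x)⁻¹ • ∫ y, (K x y * p₀ y) • y))) := by
  set c := (2 * π * σ ^ 2) ^ (-(d : ℝ) / 2)
  obtain rfl : K = gaussianKernel c α σ := funext₂ hK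
  have hgrad x : HasGradientAt p
      (-(σ ^ 2)⁻¹ • ∫ y, (gaussianKernel c α σ x y * p₀ y) • (x - α • y)) x := by
    rw [funext hp]
    exact hasGradientAt_integral_gaussianKernel_mul c α x hσ hp₀int
  have tweedie x :
      σ ^ 2 • gradient p x + p x • x = α • ∫ y, (gaussianKernel c α σ x y * p₀ y) • y := by
    rw [(hgrad x).gradient, integral_gaussianKernel_mul_smul_sub c α x hσ hα.ne' hp₀int, ← hp,
      smul_smul, mul_neg, mul_inv_cancel₀ (pow_pos hσ 2).ne', neg_one_smul, neg_sub, sub_add_cancel]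
  refine ⟨fun x => (hgrad x).differentiableAt,
    fun x => integrable_gaussianKernel_mul_smul c α x hσ hα.ne' hp₀int, tweedie, fun x hx => ?_⟩
  rw [((hgrad x).log hx.ne').gradient, ← (hgrad x).gradient, smul_comm,
    eq_sub_of_add_eq (tweedie x), smul_sub, inv_smul_smul₀ hx.ne', smul_comm, neg_sub]

/-- The paper's Lemma F.3 ("sample predictions are non-noisy images"): for the
Gaussian-smoothed density p(x) = ∫ K(x,y) p₀(y) dy, p is differentiable, the
posterior-mean integrand is integrable, σ² ∇p(x) + p(x) x = α ∫ y K(x,y) p₀(y) dy,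
and at points where p > 0 the score satisfies σ² ∇ log p(x) = −(x − α m(x)). -/
theorem gaussian_smoothing_score_posterior_mean
    (d : ℕ) (hd : 1 ≤ d) (α σ : ℝ) (hα : 0 < α) (hσ : 0 < σ)
    (p₀ : EuclideanSpace ℝ (Fin d) → ℝ)
    (hp₀meas : Measurable p₀) (hp₀nonneg : ∀ y, 0 ≤ p₀ y)
    (hp₀int : Integrable p₀) (hp₀mass : ∫ y, p₀ y = 1)
    (K : EuclideanSpace ℝ (Fin d) → EuclideanSpace ℝ (Fin d) → ℝ)
    (hK : ∀ x y, K x y =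
      (2 * π * σ ^ 2) ^ (-(d : ℝ) / 2) * Real.exp (-‖x - α • y‖ ^ 2 / (2 * σ ^ 2)))
    (p : EuclideanSpace ℝ (Fin d) → ℝ)
    (hp : ∀ x, p x = ∫ y, K x y * p₀ y) :
    (∀ x, DifferentiableAt ℝ p x) ∧
    (∀ x, Integrable (fun y => (K x y * p₀ y) • y)) ∧
    (∀ x, σ ^ 2 • gradient p x + p x • x = α • ∫ y, (K x y * p₀ y) • y) ∧
    (∀ x, 0 < p x →
      σ ^ 2 • gradient (fun z => Real.log (p z)) x =
        -(x - α • ((p x)⁻¹ • ∫ y, (K x y * p₀ y) • y))) :=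
  gaussian_smoothing_score_posterior_mean_general d α σ hα hσ p₀ hp₀int K hK p hp
end

section
/- Define T : ℝ × ℝ → ℝ × ℝ by T(θ, φ) = (Real.sqrt (1 − Real.cos θ), Real.sqrt (1 − Real.cos θ) · (4·φ/π − 1)). For every θ ∈ (0, π) and every φ ∈ ℝ, T is differentiable at (θ, φ) and the determinant of its Fréchet derivative equals (2/π) · Real.sin θ; in particular this determinant is strictly positive, and the area element transforms as dx_r dy_r = (2/π) sin θ dθ dφ. -/
open Real

/-!
The map has the triangular form `(θ, φ) ↦ (f θ, f θ * g φ)` with `f θ = √(1 - cos θ)` and `g`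
affine of slope `4/π`, so its Jacobian determinant is `f' θ * f θ * (4/π)`. Since
`(√u)' = u' / (2√u)`, the product `f' θ * f θ` equals `sin θ / 2`, and the square roots cancel.
-/

open ContinuousLinearMap

section Triangular

variable {𝕜 : Type*}

theorem det_prod_fst_smul_add_snd_smul [Field 𝕜] [TopologicalSpace 𝕜] [IsTopologicalRing 𝕜]
    (a c d : 𝕜) : ((a • fst 𝕜 𝕜 𝕜).prod (c • fst 𝕜 𝕜 𝕜 + d • snd 𝕜 𝕜 𝕜)).det = a * d := by
  rw [ContinuousLinearMap.det, ← LinearMap.det_toMatrix (Module.Basis.finTwoProd 𝕜),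
    Matrix.det_fin_two]
  simp [LinearMap.toMatrix_apply]

theorem HasDerivAt.hasFDerivAt_prodMk_mul [NontriviallyNormedField 𝕜] {f g : 𝕜 → 𝕜}
    {f' g' x y : 𝕜} (hf : HasDerivAt f f' x) (hg : HasDerivAt g g' y) :
    HasFDerivAt (fun p : 𝕜 × 𝕜 => (f p.1, f p.1 * g p.2))
      ((f' • fst 𝕜 𝕜 𝕜).prod ((g y * f') • fst 𝕜 𝕜 𝕜 + (f x * g') • snd 𝕜 𝕜 𝕜)) (x, y) := by
  have hf₁ : HasFDerivAt (fun p : 𝕜 × 𝕜 => f p.1) (f' • fst 𝕜 𝕜 𝕜) (x, y) :=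
    hf.comp_hasFDerivAt (x, y) hasFDerivAt_fst
  have hg₂ : HasFDerivAt (fun p : 𝕜 × 𝕜 => g p.2) (g' • snd 𝕜 𝕜 𝕜) (x, y) :=
    hg.comp_hasFDerivAt (x, y) hasFDerivAt_snd
  exact hf₁.prodMk <| (hf₁.mul hg₂).congr_fderiv (by rw [smul_smul, smul_smul, add_comm])

end Triangular

theorem cos_ne_one_of_sin_ne_zero {θ : ℝ} (h : sin θ ≠ 0) : cos θ ≠ 1 := fun hcos =>
  h (sin_eq_zero_iff_cos_eq.mpr (Or.inl hcos))

theorem hasDerivAt_sqrt_one_sub_cos {θ : ℝ} (h : cos θ ≠ 1) :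
    HasDerivAt (fun t => √(1 - cos t)) (sin θ / (2 * √(1 - cos θ))) θ := by
  have hsub : HasDerivAt (fun t => 1 - cos t) (sin θ) θ := by
    simpa using (hasDerivAt_cos θ).const_sub 1
  exact hsub.sqrt (sub_ne_zero.mpr h.symm)

/-- The paper's warping function 𝒯⁻¹ (Eq. 20, case φ ∈ [0, π/2)) has Jacobian
determinant (2/π)·sin θ, which is strictly positive for θ ∈ (0, π): points
uniformly scattered on the sphere remain uniform in the reference space. -/
theorem warping_jacobian_det
    (T : ℝ × ℝ → ℝ × ℝ)
    (hT : ∀ θ φ : ℝ, T (θ, φ) =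
      (Real.sqrt (1 - Real.cos θ),
        Real.sqrt (1 - Real.cos θ) * (4 * φ / π - 1))) :
    ∀ θ ∈ Set.Ioo (0 : ℝ) π, ∀ φ : ℝ,
      DifferentiableAt ℝ T (θ, φ) ∧
      (fderiv ℝ T (θ, φ)).det = (2 / π) * Real.sin θ ∧
      0 < (2 / π) * Real.sin θ := by
  intro θ hθ φ
  have hsin : 0 < sin θ := sin_pos_of_pos_of_lt_pi hθ.1 hθ.2
  have hcos : cos θ ≠ 1 := cos_ne_one_of_sin_ne_zero hsin.ne'
  have hsqrt : √(1 - cos θ) ≠ 0 := sqrt_ne_zero'.mpr (sub_pos.mpr ((cos_le_one θ).lt_of_ne hcos))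
  have haffine : HasDerivAt (fun φ : ℝ => 4 * φ / π - 1) (4 / π) φ := by
    simpa using ((hasDerivAt_id φ).const_mul 4).div_const π |>.sub_const 1
  have hder := (hasDerivAt_sqrt_one_sub_cos hcos).hasFDerivAt_prodMk_mul haffine
  rw [show (fun p : ℝ × ℝ => _) = T from funext fun p => (hT p.1 p.2).symm] at hder
  refine ⟨hder.differentiableAt, ?_, by positivity⟩
  rw [hder.fderiv, det_prod_fst_smul_add_snd_smul]
  field_simp
  norm_num
end

section
/- Let d ≥ 1 and work in ℝ^d. Let α, σ : ℝ → ℝ, t ∈ ℝ with α t ≠ 0, and suppose α has derivative α' at t and σ has derivative σ' at t (HasDerivAt). Let x : ℝ → ℝ^d and e ∈ ℝ^d. Then the following are equivalent: (i) HasDerivAt x ((α'/α t) • x t + (σ' − σ t · α'/α t) • e) t; (ii) HasDerivAt (fun s => (α s)⁻¹ • x s) (((σ'·α t − σ t·α')/(α t)^2) • e) t. Moreover (σ'·α t − σ t·α')/(α t)^2 is the derivative of s ↦ σ s / α s at t, so (ii) reads d(x_t/α_t)/dt = (d(σ_t/α_t)/dt) · e. -/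
/-! Both forms are the quotient rule for `x / α`: `d(x/α)/dt = (x' - (α'/α) x) / α`, so (ii)
is (i) divided by `α t`, and `α t · d(σ/α)/dt = σ' - σ α'/α` is exactly the coefficient of `e`
in (i). -/

section

variable {𝕜 E : Type*} [NontriviallyNormedField 𝕜] [NormedAddCommGroup E] [NormedSpace 𝕜 E]

theorem HasDerivAt.inv_smul_iff {a : 𝕜 → 𝕜} {a' : 𝕜} {t : 𝕜} (ha : HasDerivAt a a' t)
    (hat : a t ≠ 0) {x : 𝕜 → E} {y : E} :
    HasDerivAt (fun s => (a s)⁻¹ • x s) y t ↔ HasDerivAt x (a t • y + (a' / a t) • x t) t := by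
  constructor
  · intro hy
    have hx : (fun s => a s • (a s)⁻¹ • x s) =ᶠ[nhds t] x := by
      filter_upwards [ha.continuousAt.eventually_ne hat] with s hs
      rw [smul_smul, mul_inv_cancel₀ hs, one_smul]
    convert (ha.smul hy).congr_of_eventuallyEq hx.symm using 1
    rw [smul_smul, div_eq_mul_inv]
  · intro hx
    have h : HasDerivAt (fun s => (a s)⁻¹ • x s)
        ((a t)⁻¹ • (a t • y + (a' / a t) • x t) + (-a' / a t ^ 2) • x t) t :=
      (ha.inv hat).smul hx
    have hcancel : (a t)⁻¹ * (a' / a t) + -a' / a t ^ 2 = 0 := by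
      field_simp
      ring
    rwa [smul_add, smul_smul, smul_smul, add_assoc, ← add_smul, hcancel, zero_smul, add_zero,
      inv_mul_cancel₀ hat, one_smul] at h

end

theorem pf_ode_forms_equivalent_general
    (d : ℕ)
    (α σ : ℝ → ℝ) (t : ℝ) (hαt : α t ≠ 0)
    (α' σ' : ℝ) (hα : HasDerivAt α α' t) (hσ : HasDerivAt σ σ' t)
    (x : ℝ → EuclideanSpace ℝ (Fin d)) (e : EuclideanSpace ℝ (Fin d)) :
    (HasDerivAt x ((α' / α t) • x t + (σ' - σ t * α' / α t) • e) t ↔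
      HasDerivAt (fun s => (α s)⁻¹ • x s)
        (((σ' * α t - σ t * α') / (α t) ^ 2) • e) t) ∧
    HasDerivAt (fun s => σ s / α s) ((σ' * α t - σ t * α') / (α t) ^ 2) t := by
  have hcoeff : α t * ((σ' * α t - σ t * α') / (α t) ^ 2) = σ' - σ t * α' / α t := by
    field_simp
  refine ⟨?_, hσ.div hα hαt⟩
  rw [hα.inv_smul_iff hαt, smul_smul, hcoeff, add_comm]

/-- Equivalence of the standard probability-flow ODE form
dx/dt = (α'/α)x + (σ' − σα'/α)·e and the paper's rewritten form
d(x/α)/dt = (d(σ/α)/dt)·e (Eq. 3–4), together with the identification of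
(σ'α − σα')/α² as the derivative of σ/α. -/
theorem pf_ode_forms_equivalent
    (d : ℕ) (hd : 1 ≤ d)
    (α σ : ℝ → ℝ) (t : ℝ) (hαt : α t ≠ 0)
    (α' σ' : ℝ) (hα : HasDerivAt α α' t) (hσ : HasDerivAt σ σ' t)
    (x : ℝ → EuclideanSpace ℝ (Fin d)) (e : EuclideanSpace ℝ (Fin d)) :
    (HasDerivAt x ((α' / α t) • x t + (σ' - σ t * α' / α t) • e) t ↔
      HasDerivAt (fun s => (α s)⁻¹ • x s)
        (((σ' * α t - σ t * α') / (α t) ^ 2) • e) t) ∧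
    HasDerivAt (fun s => σ s / α s) ((σ' * α t - σ t * α') / (α t) ^ 2) t :=
  pf_ode_forms_equivalent_general d α σ t hαt α' σ' hα hσ x e
end
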